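/- Let 0 < σ < 1/2, let Ω be a nonempty bounded open convex subset of ℝ³, and let g : Γ₋ → ℝ be bounded and satisfy |g(X,ζ) − g(Y,ζ′)| ≤ M (|X−Y|² + |ζ−ζ′|²)^{σ/2} for all (X,ζ), (Y,ζ′) ∈ Γ₋. Define I(x,ζ) = g(p(x,ζ),ζ) e^{−ν(ζ)τ₋(x,ζ)} for x ∈ Ω, ζ ∈ ℝ³∖{0}. Then there is a constant C₉, depending only on sup|g|, M, Ω, γ and β₀, such that for all x, y ∈ Ω with dist(x,∂Ω) ≥ d₀ > 0 and dist(y,∂Ω) ≥ d₀, and all ζ ∈ ℝ³∖{0}: |I(x,ζ) − I(y,ζ)| ≤ C₉ (1+d₀⁻¹)^{2σ} |x−y|^σ. -/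

import Mathlib

/-!
If `ball y d₀ ⊆ Ω`, convexity puts the cone spanned by `x` and that ball inside `Ω`, so a backward
ray from `y` survives at least as long as a slightly shortened ray from `x`: the exit time
`τ₋(·, ζ)` is Lipschitz on `{dist(·, ∂Ω) ≥ d₀}` with constant `2 diam Ω / (d₀ |ζ|)`. Hence the
exit point `p(·, ζ)` is Lipschitz with constant `1 + 2 diam Ω / d₀`, and the Hölder bound on `g`
applies because `(p(x, ζ), ζ) ∈ Γ₋`. For the damping factor, `τ₋ ≥ d₀ / |ζ|` gives
`e^{-ν τ₋} ≤ e^{-c}` with `c = ν d₀ / |ζ|`, which absorbs the factor `ν / |ζ|` of the Lipschitz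
bound of `ν τ₋` because `c e^{-c} ≤ 1`; interpolating with the trivial bound `1` gives the
exponent `σ`.
-/

open MeasureTheory Real Set
open scoped ENNReal NNReal

noncomputable section

/-- Three-dimensional Euclidean space. -/
abbrev E3 : Type := EuclideanSpace ℝ (Fin 3)

/-- Backward exit time: `τ₋(x,ζ) = sup{t ≥ 0 : x - sζ ∈ Ω for all s ∈ [0,t)}`. -/
def tauMinus (Ω : Set E3) (x ζ : E3) : ℝ :=
  sSup {t : ℝ | 0 ≤ t ∧ ∀ s ∈ Set.Ico (0 : ℝ) t, x - s • ζ ∈ Ω}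

/-- Backward exit point: `p(x,ζ) = x - τ₋(x,ζ) ζ`. -/
def exitPoint (Ω : Set E3) (x ζ : E3) : E3 := x - tauMinus Ω x ζ • ζ

/-- The incoming boundary set `Γ₋`. -/
def GammaMinus (Ω : Set E3) : Set (E3 × E3) :=
  {z | z.1 ∈ frontier Ω ∧ ∃ t : ℝ, 0 < t ∧ z.1 + t • z.2 ∈ Ω}

/-- Collision frequency `ν(ζ) = β₀ ∫ e^{-|η|²} |η-ζ|^γ dη`. -/
def nu (γ β₀ : ℝ) (ζ : E3) : ℝ :=
  β₀ * ∫ η : E3, Real.exp (-‖η‖ ^ 2) * ‖η - ζ‖ ^ γ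

/-- The Grad-type pointwise bound (1.9) on the collision kernel `k`. -/
def KernelBound (γ δ C₁ : ℝ) (k : E3 → E3 → ℝ) : Prop :=
  ∀ ζ ζs : E3, ζ ≠ ζs →
    |k ζ ζs| ≤ C₁ * ‖ζ - ζs‖⁻¹ * (1 + ‖ζ‖ + ‖ζs‖) ^ (-(1 - γ)) *
      Real.exp (-((1 - δ) / 4) *
        (‖ζ - ζs‖ ^ 2 + ((‖ζ‖ ^ 2 - ‖ζs‖ ^ 2) / ‖ζ - ζs‖) ^ 2))

/-- The gradient bound (1.10) on the collision kernel `k` (first-variable gradient),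
together with differentiability of `k (·, ζ⁎)`. -/
def KernelGradBound (γ δ C₂ : ℝ) (k : E3 → E3 → ℝ) : Prop :=
  (∀ ζs : E3, Differentiable ℝ fun ζ => k ζ ζs) ∧
  ∀ ζ ζs : E3, ζ ≠ ζs →
    ‖fderiv ℝ (fun w => k w ζs) ζ‖ ≤
      C₂ * (1 + ‖ζ‖) * (‖ζ - ζs‖ ^ 2)⁻¹ * (1 + ‖ζ‖ + ‖ζs‖) ^ (-(1 - γ)) *
        Real.exp (-((1 - δ) / 4) *
          (‖ζ - ζs‖ ^ 2 + ((‖ζ‖ ^ 2 - ‖ζs‖ ^ 2) / ‖ζ - ζs‖) ^ 2))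

/-- The integral operator `K(f)(x,ζ) = ∫ k(ζ,ζ⁎) f(x,ζ⁎) dζ⁎`. -/
def Kop (k : E3 → E3 → ℝ) (f : E3 → E3 → ℝ) (x ζ : E3) : ℝ :=
  ∫ ζs : E3, k ζ ζs * f x ζs

/-- `f` is a mild solution of the stationary linearized Boltzmann equation:
it satisfies the exponential (Duhamel) integral form along backward characteristics,
a.e. on `Ω × ℝ³`. -/
def MildSolution (Ω : Set E3) (γ β₀ : ℝ) (k f : E3 → E3 → ℝ) : Prop :=
  ∀ᵐ z : E3 × E3, z.1 ∈ Ω →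
    f z.1 z.2 =
      f (exitPoint Ω z.1 z.2) z.2 * Real.exp (-(nu γ β₀ z.2) * tauMinus Ω z.1 z.2) +
      ∫ s in (0 : ℝ)..(tauMinus Ω z.1 z.2),
        Real.exp (-(nu γ β₀ z.2) * s) * Kop k f (z.1 - s • z.2) z.2

/-- The function `G` from the mixture lemma, written as an integral over space
and speed:
`G(x₀,ζ) = ∫₀^∞ ∫_Ω k(ζ, ρ(x₀−y)/|x₀−y|) e^{−ν(ρ)|x₀−y|/ρ} K(f)(y, ρ(x₀−y)/|x₀−y|) ρ|x₀−y|⁻² dy dρ`. -/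
def Gfun (Ω : Set E3) (γ β₀ : ℝ) (k f : E3 → E3 → ℝ) (x₀ ζ : E3) : ℝ :=
  ∫ ρ in Set.Ioi (0 : ℝ), ∫ y in Ω,
    k ζ ((ρ / ‖x₀ - y‖) • (x₀ - y)) *
      Real.exp (-(nu γ β₀ ((ρ / ‖x₀ - y‖) • (x₀ - y))) * (‖x₀ - y‖ / ρ)) *
      Kop k f y ((ρ / ‖x₀ - y‖) • (x₀ - y)) * (ρ / ‖x₀ - y‖ ^ 2)

/-- The term `III(x,ζ) = ∫₀^{τ₋(x,ζ)} e^{−ν(ζ)s} G(x−ζs, ζ) ds`. -/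
def IIIfun (Ω : Set E3) (γ β₀ : ℝ) (k f : E3 → E3 → ℝ) (x ζ : E3) : ℝ :=
  ∫ s in (0 : ℝ)..(tauMinus Ω x ζ),
    Real.exp (-(nu γ β₀ ζ) * s) * Gfun Ω γ β₀ k f (x - s • ζ) ζ

/-- The damped transport of boundary data: `I(x,ζ) = g(p(x,ζ),ζ) e^{−ν(ζ)τ₋(x,ζ)}`. -/
def Ifun (Ω : Set E3) (γ β₀ : ℝ) (g : E3 → E3 → ℝ) (x ζ : E3) : ℝ :=
  g (exitPoint Ω x ζ) ζ * Real.exp (-(nu γ β₀ ζ) * tauMinus Ω x ζ)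

/-- The twice-iterated boundary term
`II(x,ζ) = ∫₀^{τ₋(x,ζ)} ∫ e^{−ν(ζ)s} k(ζ,ζ′) e^{−ν(ζ′)τ₋(x−ζs,ζ′)} g(p(x−ζs,ζ′),ζ′) dζ′ ds`. -/
def IIfun (Ω : Set E3) (γ β₀ : ℝ) (k g : E3 → E3 → ℝ) (x ζ : E3) : ℝ :=
  ∫ s in (0 : ℝ)..(tauMinus Ω x ζ), ∫ ζ' : E3,
    Real.exp (-(nu γ β₀ ζ) * s) * k ζ ζ' *
      Real.exp (-(nu γ β₀ ζ') * tauMinus Ω (x - s • ζ) ζ') *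
      g (exitPoint Ω (x - s • ζ) ζ') ζ'

open Metric

lemma IsOpen.ball_subset_of_le_infDist_frontier {E : Type*} [NormedAddCommGroup E]
    [NormedSpace ℝ E] {Ω : Set E} {x : E} {d : ℝ} (hΩ : IsOpen Ω) (hx : x ∈ Ω)
    (hd : d ≤ infDist x (frontier Ω)) : ball x d ⊆ Ω := by
  rcases le_or_gt d 0 with hd0 | hd0
  · simp [ball_eq_empty.mpr hd0]
  refine isPreconnected_ball.subset_of_closure_inter_subset hΩ
    ⟨x, mem_ball_self hd0, hx⟩ ?_
  rintro v ⟨hvc, hvb⟩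
  by_contra hvΩ
  have hvfr : v ∈ frontier Ω := ⟨hvc, by rwa [hΩ.interior_eq]⟩
  linarith [infDist_le_dist_of_mem (x := x) hvfr, mem_ball'.mp hvb]

lemma Real.exp_neg_sub_exp_neg_le {a b c : ℝ} (hca : c ≤ a) (hab : a ≤ b) :
    exp (-a) - exp (-b) ≤ exp (-c) * (b - a) := by
  have hlin : 1 - exp (-(b - a)) ≤ b - a := by linarith [add_one_le_exp (-(b - a))]
  have hnonneg : 0 ≤ 1 - exp (-(b - a)) := by
    linarith [exp_le_one_iff.mpr (neg_nonpos.mpr (sub_nonneg.mpr hab))]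
  calc exp (-a) - exp (-b) = exp (-a) * (1 - exp (-(b - a))) := by
        rw [mul_sub, mul_one, ← exp_add]; ring_nf
    _ ≤ exp (-c) * (b - a) :=
        mul_le_mul (exp_le_exp.mpr (by linarith)) hlin hnonneg (exp_nonneg _)

lemma Real.abs_exp_neg_sub_exp_neg_le {a b c : ℝ} (hca : c ≤ a) (hcb : c ≤ b) :
    |exp (-a) - exp (-b)| ≤ exp (-c) * |a - b| := by
  rcases le_total a b with hab | hba
  · rw [abs_of_nonneg (sub_nonneg.mpr (exp_le_exp.mpr (neg_le_neg hab))), abs_sub_comm,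
      abs_of_nonneg (sub_nonneg.mpr hab)]
    exact exp_neg_sub_exp_neg_le hca hab
  · rw [abs_sub_comm, abs_of_nonneg (sub_nonneg.mpr (exp_le_exp.mpr (neg_le_neg hba))),
      abs_of_nonneg (sub_nonneg.mpr hba)]
    exact exp_neg_sub_exp_neg_le hcb hba

lemma Real.min_one_le_rpow {K σ : ℝ} (hK : 0 ≤ K) (hσ₀ : 0 ≤ σ) (hσ₁ : σ ≤ 1) :
    min 1 K ≤ K ^ σ := by
  rcases le_total K 1 with hK1 | hK1
  · calc min 1 K ≤ K ^ (1 : ℝ) := by simp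
      _ ≤ K ^ σ := rpow_le_rpow_of_exponent_ge' hK hK1 hσ₀ hσ₁
  · exact (min_le_left _ _).trans (one_le_rpow hK1 hσ₀)

lemma Real.abs_exp_neg_sub_exp_neg_le_rpow {a b c K σ : ℝ} (hσ₀ : 0 ≤ σ) (hσ₁ : σ ≤ 1)
    (hc : 0 ≤ c) (hca : c ≤ a) (hcb : c ≤ b) (hK : 0 ≤ K) (hab : |a - b| ≤ c * K) :
    |exp (-a) - exp (-b)| ≤ K ^ σ := by
  have hle_one : |exp (-a) - exp (-b)| ≤ 1 :=
    abs_sub_le_of_nonneg_of_le (exp_nonneg _) (exp_le_one_iff.mpr (by linarith))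
      (exp_nonneg _) (exp_le_one_iff.mpr (by linarith))
  have hle_K : |exp (-a) - exp (-b)| ≤ K :=
    calc |exp (-a) - exp (-b)| ≤ exp (-c) * (c * K) :=
          (abs_exp_neg_sub_exp_neg_le hca hcb).trans
            (mul_le_mul_of_nonneg_left hab (exp_nonneg _))
      _ = c * exp (-c) * K := by ring
      _ ≤ 1 * K := by
          refine mul_le_mul_of_nonneg_right ?_ hK
          exact (mul_exp_neg_le_exp_neg_one c).trans (exp_le_one_iff.mpr (by norm_num))
      _ = K := one_mul K
  exact (le_min hle_one hle_K).trans (min_one_le_rpow hK hσ₀ hσ₁)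

lemma abs_sub_le_mul_rpow_of_holder {E F : Type*} [SeminormedAddCommGroup E]
    [SeminormedAddCommGroup F] {S : Set (E × F)} {g : E → F → ℝ} {M σ : ℝ}
    (hg : ∀ z ∈ S, ∀ w ∈ S,
      |g z.1 z.2 - g w.1 w.2| ≤ M * (‖z.1 - w.1‖ ^ 2 + ‖z.2 - w.2‖ ^ 2) ^ (σ / 2))
    {p q : E} {ζ : F} (hp : (p, ζ) ∈ S) (hq : (q, ζ) ∈ S) :
    |g p ζ - g q ζ| ≤ M * ‖p - q‖ ^ σ := by
  have h := hg _ hp _ hq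
  rwa [sub_self, norm_zero, zero_pow two_ne_zero, add_zero,
    ← rpow_natCast_mul (norm_nonneg _), Nat.cast_ofNat, mul_div_cancel₀ σ two_ne_zero] at h

lemma one_add_two_mul_div_le {D d : ℝ} (hD : 0 ≤ D) (hd : 0 < d) :
    1 + 2 * D / d ≤ (1 + 2 * D) * (1 + d⁻¹) ^ 2 := by
  have he : 0 < d⁻¹ := inv_pos.mpr hd
  rw [← sub_nonneg, div_eq_mul_inv]
  have h : (1 + 2 * D) * (1 + d⁻¹) ^ 2 - (1 + 2 * D * d⁻¹)
      = 2 * d⁻¹ + d⁻¹ ^ 2 + 2 * D + 2 * D * d⁻¹ + 2 * D * d⁻¹ ^ 2 := by ring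
  rw [h]; positivity

lemma two_mul_div_sq_le {D d : ℝ} (hD : 0 ≤ D) (hd : 0 < d) :
    2 * D / d ^ 2 ≤ (1 + 2 * D) * (1 + d⁻¹) ^ 2 := by
  have he : 0 < d⁻¹ := inv_pos.mpr hd
  rw [← sub_nonneg, div_eq_mul_inv, ← inv_pow]
  have h : (1 + 2 * D) * (1 + d⁻¹) ^ 2 - 2 * D * d⁻¹ ^ 2
      = 1 + 2 * d⁻¹ + d⁻¹ ^ 2 + 2 * D + 4 * D * d⁻¹ := by ring
  rw [h]; positivity

lemma abs_mul_sub_mul_le_of_le_one {a b u v : ℝ} (hu₀ : 0 ≤ u) (hu₁ : u ≤ 1) :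
    |a * u - b * v| ≤ |a - b| + |b| * |u - v| :=
  calc |a * u - b * v| = |(a - b) * u + b * (u - v)| := by ring_nf
    _ ≤ |a - b| * u + |b| * |u - v| := by
        rw [← abs_of_nonneg hu₀, ← abs_mul, ← abs_mul, abs_of_nonneg hu₀]
        exact abs_add_le _ _
    _ ≤ |a - b| + |b| * |u - v| := by
        gcongr
        exact mul_le_of_le_one_right (abs_nonneg _) hu₁

lemma nu_nonneg {γ β₀ : ℝ} (hβ₀ : 0 ≤ β₀) (ζ : E3) : 0 ≤ nu γ β₀ ζ :=
  mul_nonneg hβ₀ <|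
    integral_nonneg fun _ => mul_nonneg (exp_nonneg _) (rpow_nonneg (norm_nonneg _) _)

section ExitTime

variable {Ω : Set E3} {x y ζ : E3} {s t d : ℝ}

lemma le_diam_div_norm_of_forall_sub_smul_mem (hbd : Bornology.IsBounded Ω) (hx : x ∈ Ω)
    (hζ : ζ ≠ 0) (ht : ∀ s ∈ Ico 0 t, x - s • ζ ∈ Ω) : t ≤ diam Ω / ‖ζ‖ := by
  have hζ0 : 0 < ‖ζ‖ := norm_pos_iff.mpr hζ
  have hd : 0 ≤ diam Ω / ‖ζ‖ := div_nonneg diam_nonneg hζ0.le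
  by_contra! h
  obtain ⟨s, hds, hst⟩ := exists_between h
  have hdist := dist_le_diam_of_mem hbd hx (ht s ⟨hd.trans hds.le, hst⟩)
  rw [dist_eq_norm, sub_sub_cancel, norm_smul, norm_of_nonneg (hd.trans hds.le),
    ← le_div_iff₀ hζ0] at hdist
  linarith

lemma le_tauMinus (hbd : Bornology.IsBounded Ω) (hx : x ∈ Ω) (hζ : ζ ≠ 0) (ht₀ : 0 ≤ t)
    (ht : ∀ s ∈ Ico 0 t, x - s • ζ ∈ Ω) : t ≤ tauMinus Ω x ζ :=
  le_csSup ⟨diam Ω / ‖ζ‖, fun _ ht' => le_diam_div_norm_of_forall_sub_smul_mem hbd hx hζ ht'.2⟩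
    ⟨ht₀, ht⟩

lemma tauMinus_nonneg (hbd : Bornology.IsBounded Ω) (hx : x ∈ Ω) (hζ : ζ ≠ 0) :
    0 ≤ tauMinus Ω x ζ :=
  le_tauMinus hbd hx hζ le_rfl (by simp)

lemma tauMinus_le_diam_div_norm (hbd : Bornology.IsBounded Ω) (hx : x ∈ Ω) (hζ : ζ ≠ 0) :
    tauMinus Ω x ζ ≤ diam Ω / ‖ζ‖ :=
  csSup_le (s := {t : ℝ | 0 ≤ t ∧ ∀ s ∈ Ico 0 t, x - s • ζ ∈ Ω}) ⟨0, le_rfl, by simp⟩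
    fun _ ht => le_diam_div_norm_of_forall_sub_smul_mem hbd hx hζ ht.2

lemma sub_smul_mem_of_lt_tauMinus (hs₀ : 0 ≤ s) (hs : s < tauMinus Ω x ζ) : x - s • ζ ∈ Ω := by
  obtain ⟨t, ht, hst⟩ := exists_lt_of_lt_csSup
    (s := {t : ℝ | 0 ≤ t ∧ ∀ s ∈ Ico 0 t, x - s • ζ ∈ Ω}) ⟨0, le_rfl, by simp⟩ hs
  exact ht.2 s ⟨hs₀, hst⟩

lemma div_norm_le_tauMinus (hbd : Bornology.IsBounded Ω) (hx : x ∈ Ω) (hζ : ζ ≠ 0)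
    (hball : ball x d ⊆ Ω) : d / ‖ζ‖ ≤ tauMinus Ω x ζ := by
  have hζ0 : 0 < ‖ζ‖ := norm_pos_iff.mpr hζ
  rcases le_or_gt d 0 with hd | hd
  · exact (div_nonpos_of_nonpos_of_nonneg hd hζ0.le).trans (tauMinus_nonneg hbd hx hζ)
  refine le_tauMinus hbd hx hζ (by positivity) fun s hs => hball ?_
  rw [mem_ball, dist_eq_norm, sub_sub_cancel_left, norm_neg, norm_smul, norm_of_nonneg hs.1]
  exact (lt_div_iff₀ hζ0).mp hs.2

lemma tauMinus_pos (hbd : Bornology.IsBounded Ω) (hop : IsOpen Ω) (hx : x ∈ Ω) (hζ : ζ ≠ 0) :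
    0 < tauMinus Ω x ζ := by
  obtain ⟨ε, hε, hball⟩ := isOpen_iff.mp hop x hx
  exact (div_pos hε (norm_pos_iff.mpr hζ)).trans_le (div_norm_le_tauMinus hbd hx hζ hball)

lemma exitPoint_notMem (hbd : Bornology.IsBounded Ω) (hop : IsOpen Ω) (hx : x ∈ Ω)
    (hζ : ζ ≠ 0) : exitPoint Ω x ζ ∉ Ω := by
  intro hp
  obtain ⟨ε, hε, hball⟩ := isOpen_iff.mp hop _ hp
  have hζ0 : 0 < ‖ζ‖ := norm_pos_iff.mpr hζ
  set τ := tauMinus Ω x ζ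
  suffices τ + ε / ‖ζ‖ ≤ τ by linarith [div_pos hε hζ0]
  refine le_tauMinus hbd hx hζ (by linarith [tauMinus_nonneg hbd hx hζ, div_pos hε hζ0])
    fun s hs => ?_
  rcases lt_or_ge s τ with hsτ | hτs
  · exact sub_smul_mem_of_lt_tauMinus hs.1 hsτ
  have hshift : x - s • ζ = exitPoint Ω x ζ - (s - τ) • ζ := by
    rw [exitPoint, sub_smul]; abel
  rw [hshift]
  apply hball
  rw [mem_ball, dist_eq_norm, sub_sub_cancel_left, norm_neg, norm_smul,
    norm_of_nonneg (sub_nonneg.mpr hτs), ← lt_div_iff₀ hζ0]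
  linarith [hs.2]

lemma exitPoint_mem_closure (hbd : Bornology.IsBounded Ω) (hop : IsOpen Ω) (hx : x ∈ Ω)
    (hζ : ζ ≠ 0) : exitPoint Ω x ζ ∈ closure Ω := by
  have hτ := tauMinus_pos hbd hop hx hζ
  have hlim : tauMinus Ω x ζ ∈ closure (Ico 0 (tauMinus Ω x ζ)) := by
    rw [closure_Ico hτ.ne]
    exact right_mem_Icc.mpr hτ.le
  have hcont : Continuous fun s : ℝ => x - s • ζ := by fun_prop
  refine closure_mono ?_ (hcont.continuousWithinAt.mem_closure_image hlim)
  rintro _ ⟨s, hs, rfl⟩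
  exact sub_smul_mem_of_lt_tauMinus hs.1 hs.2

lemma exitPoint_mem_GammaMinus (hbd : Bornology.IsBounded Ω) (hop : IsOpen Ω) (hx : x ∈ Ω)
    (hζ : ζ ≠ 0) : (exitPoint Ω x ζ, ζ) ∈ GammaMinus Ω := by
  refine ⟨?_, tauMinus Ω x ζ, tauMinus_pos hbd hop hx hζ, ?_⟩
  · rw [hop.frontier_eq]
    exact ⟨exitPoint_mem_closure hbd hop hx hζ, exitPoint_notMem hbd hop hx hζ⟩
  · simpa [exitPoint] using hx

/-- With `θ = 2r/(d+2r)`, the point `y - sζ` is the convex combination `(1-θ) u + θ v` of a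
point `u` on the backward ray from `x` and a point `v ∈ ball y d`. -/
lemma tauMinus_sub_le_mul (hbd : Bornology.IsBounded Ω) (hconv : Convex ℝ Ω) (hx : x ∈ Ω)
    (hζ : ζ ≠ 0) (hd : 0 < d) (hby : ball y d ⊆ Ω) :
    tauMinus Ω x ζ - tauMinus Ω y ζ ≤ 2 * ‖x - y‖ / d * tauMinus Ω x ζ := by
  have hτx := tauMinus_nonneg hbd hx hζ
  rcases eq_or_ne x y with rfl | hxy
  · simp
  have hr : 0 < ‖x - y‖ := norm_pos_iff.mpr (sub_ne_zero.mpr hxy)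
  set r := ‖x - y‖
  set τ := tauMinus Ω x ζ
  set θ := 2 * r / (d + 2 * r) with hθ_def
  have hθ : 0 < θ := by positivity
  have h1θ : 1 - θ = d / (d + 2 * r) := by rw [hθ_def]; field_simp; ring
  have h1θ0 : 0 < 1 - θ := by rw [h1θ]; positivity
  have hτy : (1 - θ) * τ ≤ tauMinus Ω y ζ := by
    refine le_tauMinus hbd (hby (mem_ball_self hd)) hζ (by positivity) fun s hs => ?_
    have hu : x - (s / (1 - θ)) • ζ ∈ Ω := by
      refine sub_smul_mem_of_lt_tauMinus (div_nonneg hs.1 h1θ0.le) ?_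
      rw [div_lt_iff₀ h1θ0]
      linarith [hs.2]
    have hv : y + ((1 - θ) / θ) • (y - x) ∈ Ω := by
      apply hby
      have hcoef : (1 - θ) / θ * r = d / 2 := by
        rw [h1θ, hθ_def]; field_simp
      rw [mem_ball, dist_eq_norm, add_sub_cancel_left, norm_smul,
        norm_of_nonneg (by positivity), norm_sub_rev, hcoef]
      linarith
    convert hconv hu hv h1θ0.le hθ.le (by ring) using 1
    rw [h1θ, hθ_def]
    match_scalars <;> field_simp <;> ring
  calc τ - tauMinus Ω y ζ ≤ θ * τ := by linarith
    _ ≤ 2 * r / d * τ := by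
        rw [hθ_def]
        gcongr
        linarith

lemma abs_tauMinus_sub_mul_norm_le (hbd : Bornology.IsBounded Ω) (hconv : Convex ℝ Ω)
    (hζ : ζ ≠ 0) (hd : 0 < d) (hbx : ball x d ⊆ Ω) (hby : ball y d ⊆ Ω) :
    |tauMinus Ω x ζ - tauMinus Ω y ζ| * ‖ζ‖ ≤ 2 * diam Ω * ‖x - y‖ / d := by
  have hζ0 : 0 < ‖ζ‖ := norm_pos_iff.mpr hζ
  have hsub : ∀ {u v : E3}, ball u d ⊆ Ω → ball v d ⊆ Ω →
      tauMinus Ω u ζ - tauMinus Ω v ζ ≤ 2 * ‖u - v‖ / d * (diam Ω / ‖ζ‖) := fun hbu hbv =>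
    have hu := hbu (mem_ball_self hd)
    (tauMinus_sub_le_mul hbd hconv hu hζ hd hbv).trans
      (mul_le_mul_of_nonneg_left (tauMinus_le_diam_div_norm hbd hu hζ) (by positivity))
  have habs : |tauMinus Ω x ζ - tauMinus Ω y ζ| ≤ 2 * ‖x - y‖ / d * (diam Ω / ‖ζ‖) :=
    abs_sub_le_iff.mpr ⟨hsub hbx hby, by rw [norm_sub_rev]; exact hsub hby hbx⟩
  calc |tauMinus Ω x ζ - tauMinus Ω y ζ| * ‖ζ‖
      ≤ 2 * ‖x - y‖ / d * (diam Ω / ‖ζ‖) * ‖ζ‖ := mul_le_mul_of_nonneg_right habs hζ0.le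
    _ = 2 * diam Ω * ‖x - y‖ / d := by field_simp

lemma norm_exitPoint_sub_exitPoint_le (hbd : Bornology.IsBounded Ω) (hconv : Convex ℝ Ω)
    (hζ : ζ ≠ 0) (hd : 0 < d) (hbx : ball x d ⊆ Ω) (hby : ball y d ⊆ Ω) :
    ‖exitPoint Ω x ζ - exitPoint Ω y ζ‖ ≤ (1 + 2 * diam Ω / d) * ‖x - y‖ := by
  have h : exitPoint Ω x ζ - exitPoint Ω y ζ =
      (x - y) - (tauMinus Ω x ζ - tauMinus Ω y ζ) • ζ := by
    rw [exitPoint, exitPoint, sub_smul]; abel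
  calc ‖exitPoint Ω x ζ - exitPoint Ω y ζ‖
      ≤ ‖x - y‖ + |tauMinus Ω x ζ - tauMinus Ω y ζ| * ‖ζ‖ := by
        rw [h, ← Real.norm_eq_abs, ← norm_smul]
        exact norm_sub_le _ _
    _ ≤ ‖x - y‖ + 2 * diam Ω * ‖x - y‖ / d := by
        gcongr
        exact abs_tauMinus_sub_mul_norm_le hbd hconv hζ hd hbx hby
    _ = (1 + 2 * diam Ω / d) * ‖x - y‖ := by ring

lemma abs_exp_neg_mul_tauMinus_sub_le_rpow {ν σ : ℝ} (hbd : Bornology.IsBounded Ω)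
    (hconv : Convex ℝ Ω) (hσ₀ : 0 ≤ σ) (hσ₁ : σ ≤ 1) (hν : 0 ≤ ν) (hζ : ζ ≠ 0) (hd : 0 < d)
    (hbx : ball x d ⊆ Ω) (hby : ball y d ⊆ Ω) :
    |exp (-ν * tauMinus Ω x ζ) - exp (-ν * tauMinus Ω y ζ)| ≤
      (2 * diam Ω / d ^ 2 * ‖x - y‖) ^ σ := by
  have hζ0 : 0 < ‖ζ‖ := norm_pos_iff.mpr hζ
  have hc : 0 ≤ ν * (d / ‖ζ‖) := by positivity
  have lower : ∀ {u}, ball u d ⊆ Ω → ν * (d / ‖ζ‖) ≤ ν * tauMinus Ω u ζ := fun hbu =>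
    mul_le_mul_of_nonneg_left (div_norm_le_tauMinus hbd (hbu (mem_ball_self hd)) hζ hbu) hν
  rw [neg_mul, neg_mul]
  refine Real.abs_exp_neg_sub_exp_neg_le_rpow hσ₀ hσ₁ hc (lower hbx) (lower hby)
    (by positivity) ?_
  calc |ν * tauMinus Ω x ζ - ν * tauMinus Ω y ζ|
      = ν * (d / ‖ζ‖) * (|tauMinus Ω x ζ - tauMinus Ω y ζ| * ‖ζ‖ / d ^ 2 * d) := by
        rw [← mul_sub, abs_mul, abs_of_nonneg hν]
        field_simp
    _ ≤ ν * (d / ‖ζ‖) * (2 * diam Ω * ‖x - y‖ / d / d ^ 2 * d) := by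
        gcongr
        exact abs_tauMinus_sub_mul_norm_le hbd hconv hζ hd hbx hby
    _ = ν * (d / ‖ζ‖) * (2 * diam Ω / d ^ 2 * ‖x - y‖) := by
        field_simp

end ExitTime

theorem stmt_13_general (σ : ℝ) (hσ₀ : 0 < σ) (hσ₁ : σ < 1 / 2)
    (Ω : Set E3) (hbd : Bornology.IsBounded Ω)
    (hop : IsOpen Ω) (hconv : Convex ℝ Ω)
    (γ β₀ : ℝ) (hβ₀ : 0 < β₀)
    (M B : ℝ) (hM : 0 < M) (hB : 0 ≤ B) :
    ∃ C₉ : ℝ, 0 < C₉ ∧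
      ∀ g : E3 → E3 → ℝ,
        (∀ z ∈ GammaMinus Ω, |g z.1 z.2| ≤ B) →
        (∀ z ∈ GammaMinus Ω, ∀ w ∈ GammaMinus Ω,
          |g z.1 z.2 - g w.1 w.2| ≤
            M * (‖z.1 - w.1‖ ^ 2 + ‖z.2 - w.2‖ ^ 2) ^ (σ / 2)) →
        ∀ d₀ : ℝ, 0 < d₀ → ∀ x ∈ Ω, ∀ y ∈ Ω,
          d₀ ≤ Metric.infDist x (frontier Ω) →
          d₀ ≤ Metric.infDist y (frontier Ω) →
          ∀ ζ : E3, ζ ≠ 0 →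
            |Ifun Ω γ β₀ g x ζ - Ifun Ω γ β₀ g y ζ| ≤
              C₉ * (1 + d₀⁻¹) ^ (2 * σ) * ‖x - y‖ ^ σ := by
  refine ⟨(M + B) * (1 + 2 * diam Ω) ^ σ, by positivity, ?_⟩
  intro g hgB hgH d₀ hd₀ x hx y hy hdx hdy ζ hζ
  have hbx := hop.ball_subset_of_le_infDist_frontier hx hdx
  have hby := hop.ball_subset_of_le_infDist_frontier hy hdy
  have hΓy := exitPoint_mem_GammaMinus hbd hop hy hζ
  set A := (1 + 2 * diam Ω) * (1 + d₀⁻¹) ^ 2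
  have hg : |g (exitPoint Ω x ζ) ζ - g (exitPoint Ω y ζ) ζ| ≤ M * (A * ‖x - y‖) ^ σ := by
    refine (abs_sub_le_mul_rpow_of_holder hgH
      (exitPoint_mem_GammaMinus hbd hop hx hζ) hΓy).trans ?_
    gcongr
    refine (norm_exitPoint_sub_exitPoint_le hbd hconv hζ hd₀ hbx hby).trans ?_
    gcongr
    exact one_add_two_mul_div_le diam_nonneg hd₀
  have hexp : |exp (-(nu γ β₀ ζ) * tauMinus Ω x ζ) - exp (-(nu γ β₀ ζ) * tauMinus Ω y ζ)|
      ≤ (A * ‖x - y‖) ^ σ := by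
    refine (abs_exp_neg_mul_tauMinus_sub_le_rpow hbd hconv hσ₀.le (by linarith)
      (nu_nonneg hβ₀.le ζ) hζ hd₀ hbx hby).trans ?_
    gcongr
    exact two_mul_div_sq_le diam_nonneg hd₀
  have hdamp : exp (-(nu γ β₀ ζ) * tauMinus Ω x ζ) ≤ 1 :=
    exp_le_one_iff.mpr <| mul_nonpos_of_nonpos_of_nonneg
      (neg_nonpos.mpr (nu_nonneg hβ₀.le ζ)) (tauMinus_nonneg hbd hx hζ)
  calc |Ifun Ω γ β₀ g x ζ - Ifun Ω γ β₀ g y ζ|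
      ≤ |g (exitPoint Ω x ζ) ζ - g (exitPoint Ω y ζ) ζ| + |g (exitPoint Ω y ζ) ζ| *
          |exp (-(nu γ β₀ ζ) * tauMinus Ω x ζ) - exp (-(nu γ β₀ ζ) * tauMinus Ω y ζ)| :=
        abs_mul_sub_mul_le_of_le_one (exp_nonneg _) hdamp
    _ ≤ M * (A * ‖x - y‖) ^ σ + B * (A * ‖x - y‖) ^ σ :=
        add_le_add hg (mul_le_mul (hgB _ hΓy) hexp (abs_nonneg _) hB)
    _ = (M + B) * (1 + 2 * diam Ω) ^ σ * (1 + d₀⁻¹) ^ (2 * σ) * ‖x - y‖ ^ σ := by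
        rw [mul_rpow (by positivity) (norm_nonneg _), mul_rpow (by positivity) (by positivity),
          ← rpow_natCast_mul (by positivity), Nat.cast_ofNat]
        ring

/-- Space-regularity of the damped transport `I` of Hölder boundary data
(estimate (4.2) of Proposition 4.1). -/
theorem stmt_13 (σ : ℝ) (hσ₀ : 0 < σ) (hσ₁ : σ < 1 / 2)
    (Ω : Set E3) (hne : Ω.Nonempty) (hbd : Bornology.IsBounded Ω)
    (hop : IsOpen Ω) (hconv : Convex ℝ Ω)
    (γ β₀ : ℝ) (hγ₀ : 0 ≤ γ) (hγ₁ : γ < 1) (hβ₀ : 0 < β₀)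
    (M B : ℝ) (hM : 0 < M) (hB : 0 ≤ B) :
    ∃ C₉ : ℝ, 0 < C₉ ∧
      ∀ g : E3 → E3 → ℝ,
        (∀ z ∈ GammaMinus Ω, |g z.1 z.2| ≤ B) →
        (∀ z ∈ GammaMinus Ω, ∀ w ∈ GammaMinus Ω,
          |g z.1 z.2 - g w.1 w.2| ≤
            M * (‖z.1 - w.1‖ ^ 2 + ‖z.2 - w.2‖ ^ 2) ^ (σ / 2)) →
        ∀ d₀ : ℝ, 0 < d₀ → ∀ x ∈ Ω, ∀ y ∈ Ω,
          d₀ ≤ Metric.infDist x (frontier Ω) →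
          d₀ ≤ Metric.infDist y (frontier Ω) →
          ∀ ζ : E3, ζ ≠ 0 →
            |Ifun Ω γ β₀ g x ζ - Ifun Ω γ β₀ g y ζ| ≤
              C₉ * (1 + d₀⁻¹) ^ (2 * σ) * ‖x - y‖ ^ σ :=
  stmt_13_general σ hσ₀ hσ₁ Ω hbd hop hconv γ β₀ hβ₀ M B hM hB
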